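/- Let G be a connected weighted graph, s,t vertices, and ε > 0. Let H₀ be a subgraph of G with d_{H₀}(s,t) > d_G(s,t) + ε·W(s,t), and let H₁ be H₀ together with all edges of π(s,t). Let x be a vertex with d_{H₀}(u,x) ≤ (ε/4)·W(s,t) for some vertex u on π(s,t). Then: (1) d_{H₁}(s,x) ≤ d_G(s,x) + (ε/2)·W(s,t) and d_{H₁}(t,x) ≤ d_G(t,x) + (ε/2)·W(s,t); and (2) d_{H₀}(s,x) − d_{H₁}(s,x) ≥ (ε/4)·W(s,t) or d_{H₀}(t,x) − d_{H₁}(t,x) ≥ (ε/4)·W(s,t). -/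

import Mathlib

open scoped ENNReal Classical

/-- The total weight of a walk: the sum of the weights of its edges. -/
noncomputable def walkWeight {V : Type} (G : SimpleGraph V) (w : Sym2 V → ℝ≥0∞)
    {s t : V} (p : G.Walk s t) : ℝ≥0∞ :=
  (p.edges.map w).sum

/-- Shortest-path distance in the weighted graph `(G, w)`, equal to `⊤` if there is no path. -/
noncomputable def gdist {V : Type} (G : SimpleGraph V) (w : Sym2 V → ℝ≥0∞)
    (s t : V) : ℝ≥0∞ :=
  ⨅ p : G.Walk s t, walkWeight G w p

/-- The maximum edge weight along a walk (0 for the trivial walk). -/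
noncomputable def maxEdge {V : Type} (G : SimpleGraph V) (w : Sym2 V → ℝ≥0∞)
    {s t : V} (p : G.Walk s t) : ℝ≥0∞ :=
  (p.edges.map w).foldr max 0

/-- `π` assigns to each ordered vertex pair a shortest path: a walk whose total
weight equals the shortest-path distance. -/
def IsShortestPathScheme {V : Type} (G : SimpleGraph V) (w : Sym2 V → ℝ≥0∞)
    (π : (s t : V) → G.Walk s t) : Prop :=
  ∀ s t : V, walkWeight G w (π s t) = gdist G w s t

/-- The edge weights are positive and finite on all edges of `G`. -/
def PosWeights {V : Type} (G : SimpleGraph V) (w : Sym2 V → ℝ≥0∞) : Prop :=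
  ∀ e ∈ G.edgeSet, 0 < w e ∧ w e ≠ ⊤

/-!
Cut `π(s,t)` at `u` into a prefix and a suffix; both are shortest paths and lie in `H₁`, and
`x` is within `q = (ε/4)·W(s,t)` of `u` in `H₀ ⊆ H₁` (hence also in `G`), which gives the two
set-off bounds. For the improvement, the same cut gives
`d_{H₁}(s,x) + d_{H₁}(t,x) ≤ d_G(s,t) + 2q`, whereas the triangle inequality in `H₀` and the
violation give `d_{H₀}(s,x) + d_{H₀}(t,x) ≥ d_{H₀}(s,t) > d_G(s,t) + 4q`; so one of the two
distances drops by at least `q`.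
-/

namespace ENNReal

theorem le_tsub_or_le_tsub_of_add_le {a b c d r : ℝ≥0∞} (hc : c ≠ ⊤) (hd : d ≠ ⊤)
    (h : c + d + (r + r) ≤ a + b) : r ≤ a - c ∨ r ≤ b - d := by
  by_contra! hlt
  have ha : a < r + c := ENNReal.lt_add_of_sub_lt_right (.inr hc) hlt.1
  have hb : b < r + d := ENNReal.lt_add_of_sub_lt_right (.inr hd) hlt.2
  have hab : a + b < c + d + (r + r) := by
    calc a + b < r + c + (r + d) := ENNReal.add_lt_add ha hb
      _ = c + d + (r + r) := by ring
  exact (hab.trans_le h).false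

end ENNReal

section WeightedDistance

open SimpleGraph

variable {V : Type} {G H : SimpleGraph V} {w : Sym2 V → ℝ≥0∞}

theorem walkWeight_append {a b c : V} (p : G.Walk a b) (q : G.Walk b c) :
    walkWeight G w (p.append q) = walkWeight G w p + walkWeight G w q := by
  simp [walkWeight, Walk.edges_append]

theorem walkWeight_reverse {a b : V} (p : G.Walk a b) :
    walkWeight G w p.reverse = walkWeight G w p := by
  simp [walkWeight, Walk.edges_reverse, List.map_reverse, List.sum_reverse]

theorem gdist_le_walkWeight {a b : V} (p : G.Walk a b) : gdist G w a b ≤ walkWeight G w p :=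
  iInf_le _ p

theorem gdist_le_walkWeight_of_edges_mem {a b : V} (p : G.Walk a b)
    (hp : ∀ e ∈ p.edges, e ∈ H.edgeSet) : gdist H w a b ≤ walkWeight G w p := by
  refine (gdist_le_walkWeight (p.transfer H hp)).trans_eq ?_
  simp [walkWeight, Walk.edges_transfer]

theorem gdist_anti (h : G ≤ H) (a b : V) : gdist H w a b ≤ gdist G w a b :=
  le_iInf fun p => gdist_le_walkWeight_of_edges_mem p fun _ he =>
    edgeSet_mono h (p.edges_subset_edgeSet he)

theorem gdist_comm (a b : V) : gdist G w a b = gdist G w b a := by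
  have key : ∀ a b : V, gdist G w a b ≤ gdist G w b a := fun a b =>
    le_iInf fun p => (gdist_le_walkWeight p.reverse).trans_eq (walkWeight_reverse p)
  exact (key a b).antisymm (key b a)

theorem gdist_triangle (a b c : V) : gdist G w a c ≤ gdist G w a b + gdist G w b c := by
  unfold gdist
  rw [ENNReal.iInf_add]
  refine le_iInf fun p => ?_
  rw [ENNReal.add_iInf]
  exact le_iInf fun q => (gdist_le_walkWeight (p.append q)).trans_eq (walkWeight_append p q)

theorem gdist_le_walkWeight_add_gdist {a b : V} (p : G.Walk a b)
    (hp : ∀ e ∈ p.edges, e ∈ H.edgeSet) (c : V) :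
    gdist H w a c ≤ walkWeight G w p + gdist H w b c :=
  (gdist_triangle a b c).trans (by gcongr; exact gdist_le_walkWeight_of_edges_mem p hp)

theorem walkWeight_le_gdist_of_append_left {a b c : V} {p : G.Walk a b} {q : G.Walk b c}
    (hpq : walkWeight G w (p.append q) ≤ gdist G w a c) (hq : walkWeight G w q ≠ ⊤) :
    walkWeight G w p ≤ gdist G w a b := by
  refine ENNReal.le_of_add_le_add_right hq ?_
  calc walkWeight G w p + walkWeight G w q = walkWeight G w (p.append q) :=
        (walkWeight_append p q).symm
    _ ≤ gdist G w a b + gdist G w b c := hpq.trans (gdist_triangle a b c)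
    _ ≤ gdist G w a b + walkWeight G w q := by gcongr; exact gdist_le_walkWeight q

theorem mem_edgeSet_sup_fromEdgeSet_edges {a b : V} (p : G.Walk a b) {e : Sym2 V}
    (he : e ∈ p.edges) : e ∈ (H ⊔ fromEdgeSet {e | e ∈ p.edges}).edgeSet := by
  rw [edgeSet_sup, edgeSet_fromEdgeSet]
  exact Or.inr ⟨he, G.not_isDiag_of_mem_edgeSet (p.edges_subset_edgeSet he)⟩

variable {s t u : V} {P : G.Walk s t}

theorem gdist_start_le_of_mem_support (hPs : walkWeight G w P ≤ gdist G w s t)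
    (hPfin : walkWeight G w P ≠ ⊤) (hPH : ∀ e ∈ P.edges, e ∈ H.edgeSet) (hu : u ∈ P.support)
    (x : V) : gdist H w s x ≤ gdist G w s u + gdist H w u x := by
  obtain ⟨p₁, p₂, rfl⟩ := Walk.mem_support_iff_exists_append.1 hu
  rw [walkWeight_append] at hPfin
  have hp₁ : walkWeight G w p₁ ≤ gdist G w s u :=
    walkWeight_le_gdist_of_append_left hPs (ENNReal.add_ne_top.1 hPfin).2
  refine (gdist_le_walkWeight_add_gdist p₁ (fun e he => hPH e ?_) x).trans (by gcongr)
  rw [Walk.edges_append]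
  exact List.mem_append_left _ he

theorem gdist_end_le_of_mem_support (hPs : walkWeight G w P ≤ gdist G w s t)
    (hPfin : walkWeight G w P ≠ ⊤) (hPH : ∀ e ∈ P.edges, e ∈ H.edgeSet) (hu : u ∈ P.support)
    (x : V) : gdist H w t x ≤ gdist G w t u + gdist H w u x := by
  refine gdist_start_le_of_mem_support (P := P.reverse) ?_ ?_ ?_ ?_ x
  · rwa [walkWeight_reverse, gdist_comm]
  · rwa [walkWeight_reverse]
  · simpa only [Walk.edges_reverse, List.mem_reverse] using hPH
  · simpa only [Walk.support_reverse, List.mem_reverse] using hu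

theorem gdist_start_add_gdist_end_le (hPH : ∀ e ∈ P.edges, e ∈ H.edgeSet)
    (hu : u ∈ P.support) (x : V) :
    gdist H w s x + gdist H w t x ≤ walkWeight G w P + (gdist H w u x + gdist H w u x) := by
  obtain ⟨p₁, p₂, rfl⟩ := Walk.mem_support_iff_exists_append.1 hu
  have hp₁ : ∀ e ∈ p₁.edges, e ∈ H.edgeSet := fun e he =>
    hPH e (by rw [Walk.edges_append]; exact List.mem_append_left _ he)
  have hp₂ : ∀ e ∈ p₂.reverse.edges, e ∈ H.edgeSet := fun e he => by
    rw [Walk.edges_reverse, List.mem_reverse] at he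
    exact hPH e (by rw [Walk.edges_append]; exact List.mem_append_right _ he)
  calc gdist H w s x + gdist H w t x
      ≤ walkWeight G w p₁ + gdist H w u x + (walkWeight G w p₂.reverse + gdist H w u x) :=
        add_le_add (gdist_le_walkWeight_add_gdist p₁ hp₁ x)
          (gdist_le_walkWeight_add_gdist p₂.reverse hp₂ x)
    _ = walkWeight G w (p₁.append p₂) + (gdist H w u x + gdist H w u x) := by
        rw [walkWeight_reverse, walkWeight_append]; ring

end WeightedDistance

theorem improvements_eps_W_general
    (V : Type) (G : SimpleGraph V) (w : Sym2 V → ℝ≥0∞)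
    (π : (s t : V) → G.Walk s t) (hπ : IsShortestPathScheme G w π)
    (s t : V) (ε : ℝ) (hε : 0 < ε)
    (H₀ H₁ : SimpleGraph V) (hH₀ : H₀ ≤ G)
    (hviol : gdist H₀ w s t >
      gdist G w s t + ENNReal.ofReal ε * maxEdge G w (π s t))
    (hH₁ : H₁ = H₀ ⊔ SimpleGraph.fromEdgeSet {e | e ∈ (π s t).edges})
    (x u : V) (hu : u ∈ (π s t).support)
    (hx : gdist H₀ w u x ≤ ENNReal.ofReal (ε / 4) * maxEdge G w (π s t)) :
    (gdist H₁ w s x ≤ gdist G w s x + ENNReal.ofReal (ε / 2) * maxEdge G w (π s t) ∧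
      gdist H₁ w t x ≤ gdist G w t x + ENNReal.ofReal (ε / 2) * maxEdge G w (π s t)) ∧
    (gdist H₀ w s x - gdist H₁ w s x ≥ ENNReal.ofReal (ε / 4) * maxEdge G w (π s t) ∨
      gdist H₀ w t x - gdist H₁ w t x ≥ ENNReal.ofReal (ε / 4) * maxEdge G w (π s t)) := by
  set W := maxEdge G w (π s t)
  set q := ENNReal.ofReal (ε / 4) * W
  have hq₂ : q + q = ENNReal.ofReal (ε / 2) * W := by
    rw [← add_mul, ← ENNReal.ofReal_add (by positivity) (by positivity)]
    congr 2
    ring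
  have hq₄ : q + q + (q + q) = ENNReal.ofReal ε * W := by
    rw [hq₂, ← add_mul, ← ENNReal.ofReal_add (by positivity) (by positivity)]
    congr 2
    ring
  have hfin : gdist G w s t + (q + q + (q + q)) ≠ ⊤ := hq₄ ▸ hviol.ne_top
  have hPfin : walkWeight G w (π s t) ≠ ⊤ := (hπ s t).trans_ne (ENNReal.add_ne_top.1 hfin).1
  have hPH₁ : ∀ e ∈ (π s t).edges, e ∈ H₁.edgeSet :=
    fun e he => hH₁ ▸ mem_edgeSet_sup_fromEdgeSet_edges _ he
  have hux : gdist H₁ w u x ≤ q := (gdist_anti (hH₁ ▸ le_sup_left) u x).trans hx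
  have hxu : gdist G w x u ≤ q := (gdist_comm x u).trans_le ((gdist_anti hH₀ u x).trans hx)
  have setOff : ∀ a, gdist H₁ w a x ≤ gdist G w a u + gdist H₁ w u x →
      gdist H₁ w a x ≤ gdist G w a x + ENNReal.ofReal (ε / 2) * W := fun a h =>
    calc gdist H₁ w a x ≤ gdist G w a u + gdist H₁ w u x := h
      _ ≤ gdist G w a x + gdist G w x u + q := by gcongr; exact gdist_triangle a x u
      _ ≤ gdist G w a x + ENNReal.ofReal (ε / 2) * W := by rw [add_assoc, ← hq₂]; gcongr
  refine ⟨⟨setOff s (gdist_start_le_of_mem_support (hπ s t).le hPfin hPH₁ hu x),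
    setOff t (gdist_end_le_of_mem_support (hπ s t).le hPfin hPH₁ hu x)⟩, ?_⟩
  have hsum : gdist H₁ w s x + gdist H₁ w t x ≤ gdist G w s t + (q + q) :=
    (gdist_start_add_gdist_end_le hPH₁ hu x).trans (by rw [hπ]; gcongr)
  have hsumfin : gdist H₁ w s x + gdist H₁ w t x ≠ ⊤ :=
    ne_top_of_le_ne_top hfin (hsum.trans (add_le_add le_rfl le_self_add))
  refine ENNReal.le_tsub_or_le_tsub_of_add_le (ENNReal.add_ne_top.1 hsumfin).1
    (ENNReal.add_ne_top.1 hsumfin).2 ?_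
  calc gdist H₁ w s x + gdist H₁ w t x + (q + q)
      ≤ gdist G w s t + (q + q + (q + q)) := (add_le_add hsum le_rfl).trans_eq (add_assoc _ _ _)
    _ ≤ gdist H₀ w s t := by rw [hq₄]; exact hviol.le
    _ ≤ gdist H₀ w s x + gdist H₀ w t x := (gdist_triangle s x t).trans_eq (by rw [gdist_comm x t])

/-- Set-off/improvement lemma for `+εW(·,·)` spanner completion.
`H₀` is a subgraph still violating the `+ε·W(s,t)` bound for `(s,t)`, `H₁` is `H₀` plus all
edges of `π(s,t)`, and `x` is a vertex with `d_{H₀}(u,x) ≤ (ε/4)·W(s,t)` for some vertex `u`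
on `π(s,t)`. Then the pairs `(s,x)` and `(t,x)` are set off in `H₁`, and at least one of
them improves by at least `(ε/4)·W(s,t)`. -/
theorem improvements_eps_W
    (V : Type) [Fintype V] (G : SimpleGraph V) (w : Sym2 V → ℝ≥0∞)
    (hconn : G.Connected) (hw : PosWeights G w)
    (π : (s t : V) → G.Walk s t) (hπ : IsShortestPathScheme G w π)
    (s t : V) (ε : ℝ) (hε : 0 < ε)
    (H₀ H₁ : SimpleGraph V) (hH₀ : H₀ ≤ G)
    (hviol : gdist H₀ w s t >
      gdist G w s t + ENNReal.ofReal ε * maxEdge G w (π s t))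
    (hH₁ : H₁ = H₀ ⊔ SimpleGraph.fromEdgeSet {e | e ∈ (π s t).edges})
    (x u : V) (hu : u ∈ (π s t).support)
    (hx : gdist H₀ w u x ≤ ENNReal.ofReal (ε / 4) * maxEdge G w (π s t)) :
    (gdist H₁ w s x ≤ gdist G w s x + ENNReal.ofReal (ε / 2) * maxEdge G w (π s t) ∧
      gdist H₁ w t x ≤ gdist G w t x + ENNReal.ofReal (ε / 2) * maxEdge G w (π s t)) ∧
    (gdist H₀ w s x - gdist H₁ w s x ≥ ENNReal.ofReal (ε / 4) * maxEdge G w (π s t) ∨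
      gdist H₀ w t x - gdist H₁ w t x ≥ ENNReal.ofReal (ε / 4) * maxEdge G w (π s t)) :=
  improvements_eps_W_general V G w π hπ s t ε hε H₀ H₁ hH₀ hviol hH₁ x u hu hx
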